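/- Let L ⊆ Q be an extension of Hom-Lie algebras such that Q is an algebra of quotients of L, and let q ∈ Q. Then (L:q) is an essential Hom-ideal of L and Ann_L((L:q)) = {0}. -/

import Mathlib

/-- A Hom-Lie algebra structure on a vector space `Q` over a field `𝔽`, with the
twisting map `α` additionally satisfying condition (2.1):
`α [x,y] = [α x, y] = [x, α y]`. -/
structure HomLieAlgebra (𝔽 : Type*) [Field 𝔽] (Q : Type*) [AddCommGroup Q] [Module 𝔽 Q] where
  bracket : Q →ₗ[𝔽] Q →ₗ[𝔽] Q
  alpha : Q →ₗ[𝔽] Q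
  skew : ∀ x y, bracket x y = - bracket y x
  jacobi : ∀ x y z, bracket (alpha x) (bracket y z) + bracket (alpha y) (bracket z x)
      + bracket (alpha z) (bracket x y) = 0
  comm₁ : ∀ x y, alpha (bracket x y) = bracket (alpha x) y
  comm₂ : ∀ x y, alpha (bracket x y) = bracket x (alpha y)

namespace HomLieAlgebra

variable {𝔽 : Type*} [Field 𝔽] {Q : Type*} [AddCommGroup Q] [Module 𝔽 Q]
variable (H : HomLieAlgebra 𝔽 Q)

/-- `S` is a Hom-subalgebra: a subspace closed under `α` and the bracket. -/
def IsSubalgebra (S : Submodule 𝔽 Q) : Prop :=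
  (∀ x ∈ S, H.alpha x ∈ S) ∧ ∀ x ∈ S, ∀ y ∈ S, H.bracket x y ∈ S

/-- `I` is a Hom-ideal of the Hom-subalgebra `L`:
a subspace `I ⊆ L` with `α(I) ⊆ I` and `[I, L] ⊆ I`. -/
def IsIdealOf (L I : Submodule 𝔽 Q) : Prop :=
  I ≤ L ∧ (∀ x ∈ I, H.alpha x ∈ I) ∧ ∀ x ∈ I, ∀ y ∈ L, H.bracket x y ∈ I

/-- The α-annihilator of the set `S` inside the subalgebra `M`:
`Ann_M(S) = {x ∈ M | [x, α(y)] = 0 for all y ∈ S}`. -/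
def annIn (M : Submodule 𝔽 Q) (S : Set Q) : Set Q :=
  {x | x ∈ M ∧ ∀ y ∈ S, H.bracket x (H.alpha y) = 0}

/-- `I` is an essential Hom-ideal of `L`: it hits every nonzero Hom-ideal of `L`. -/
def IsEssentialIdealOf (L I : Submodule 𝔽 Q) : Prop :=
  H.IsIdealOf L I ∧ ∀ J : Submodule 𝔽 Q, H.IsIdealOf L J → J ≠ ⊥ → I ⊓ J ≠ ⊥

/-- The Hom-Lie algebra `L` is semiprime: `[I, α(I)] ≠ {0}` for every nonzero
Hom-ideal `I` of `L`. -/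
def IsSemiprimeOn (L : Submodule 𝔽 Q) : Prop :=
  ∀ I : Submodule 𝔽 Q, H.IsIdealOf L I → I ≠ ⊥ →
    ∃ x ∈ I, ∃ y ∈ I, H.bracket x (H.alpha y) ≠ 0

/-- The Hom-Lie algebra `L` is prime: `[I, α(J)] ≠ {0}` for all nonzero
Hom-ideals `I`, `J` of `L`. -/
def IsPrimeOn (L : Submodule 𝔽 Q) : Prop :=
  ∀ I J : Submodule 𝔽 Q, H.IsIdealOf L I → I ≠ ⊥ → H.IsIdealOf L J → J ≠ ⊥ →
    ∃ x ∈ I, ∃ y ∈ J, H.bracket x (H.alpha y) ≠ 0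

/-- The iterated brackets `[[…[[q,x₁],x₂],…],xₙ]` with `xᵢ ∈ L` (including `q` itself). -/
inductive IsWord (L : Submodule 𝔽 Q) (q : Q) : Q → Prop
  | base : IsWord L q q
  | step {p : Q} (x : Q) : IsWord L q p → x ∈ L → IsWord L q (H.bracket p x)

/-- `_L(q)`: the linear span in `Q` of `q` together with all the iterated brackets
`[[…[[q,x₁],x₂],…],xₙ]` with `xᵢ ∈ L`. -/
def wordSpan (L : Submodule 𝔽 Q) (q : Q) : Submodule 𝔽 Q :=
  Submodule.span 𝔽 {p | H.IsWord L q p}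

/-- `(L : q) = {x ∈ L | [x, α(_L(q))] ⊆ L}`, as a subspace of `Q`. -/
def quotIdeal (L : Submodule 𝔽 Q) (q : Q) : Submodule 𝔽 Q where
  carrier := {x | x ∈ L ∧ ∀ p ∈ H.wordSpan L q, H.bracket x (H.alpha p) ∈ L}
  add_mem' := by
    rintro a b ⟨haL, ha⟩ ⟨hbL, hb⟩
    refine ⟨L.add_mem haL hbL, fun p hp => ?_⟩
    rw [map_add, LinearMap.add_apply]
    exact L.add_mem (ha p hp) (hb p hp)
  zero_mem' := ⟨L.zero_mem, fun p _ => by simp⟩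
  smul_mem' := by
    rintro c a ⟨haL, ha⟩
    refine ⟨L.smul_mem c haL, fun p hp => ?_⟩
    rw [map_smul, LinearMap.smul_apply]
    exact L.smul_mem c (ha p hp)

/-- `Q` is an algebra of quotients of its Hom-subalgebra `L`: for all `p, q ∈ Q` with
`p ≠ 0` there is `x ∈ (L : q)` with `[x, α(p)] ≠ 0`. -/
def IsAlgebraOfQuotients (L : Submodule 𝔽 Q) : Prop :=
  ∀ p q : Q, p ≠ 0 → ∃ x ∈ H.quotIdeal L q, H.bracket x (H.alpha p) ≠ 0

/-- `Q` is a weak algebra of quotients of its Hom-subalgebra `L`: for every nonzero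
`q ∈ Q` there is `x ∈ L` with `0 ≠ [x, α(q)] ∈ L`. -/
def IsWeakAlgebraOfQuotients (L : Submodule 𝔽 Q) : Prop :=
  ∀ q : Q, q ≠ 0 → ∃ x ∈ L, H.bracket x (H.alpha q) ≠ 0 ∧ H.bracket x (H.alpha q) ∈ L

/-- `Q` is ideally absorbed into `L`: for every nonzero `q ∈ Q` there is a Hom-ideal `I`
of `L` with `Ann_L(I) = {0}` and `{0} ≠ [I, α(q)] ⊆ L`. -/
def IsIdeallyAbsorbed (L : Submodule 𝔽 Q) : Prop :=
  ∀ q : Q, q ≠ 0 → ∃ I : Submodule 𝔽 Q, H.IsIdealOf L I ∧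
    H.annIn L (I : Set Q) = {0} ∧
    (∃ y ∈ I, H.bracket y (H.alpha q) ≠ 0) ∧
    ∀ y ∈ I, H.bracket y (H.alpha q) ∈ (L : Set Q)

/-- The inner derivation `ad_q : p ↦ [α(q), p]`. -/
def ad (q : Q) : Module.End 𝔽 Q := H.bracket (H.alpha q)

end HomLieAlgebra

/-! The key identity is the Hom-Leibniz rule `[[x, y], α p] = [x, α [y, p]] + [[x, α p], y]`,
the Hom-Jacobi identity rewritten using (2.1). As `_L(q)` is stable under right brackets by
`L`, it shows that `(L : q)` is a Hom-ideal. The quotient condition gives, for every `p ≠ 0`, some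
`x ∈ (L : q)` with `[x, α p] ≠ 0`. For `p` in a Hom-ideal `J` this element lies in `(L : q) ∩ J`;
and `p` cannot annihilate `(L : q)`, since `[p, α x] = -[x, α p]`. -/

namespace HomLieAlgebra

variable {𝔽 Q : Type*} [Field 𝔽] [AddCommGroup Q] [Module 𝔽 Q] (H : HomLieAlgebra 𝔽 Q)

theorem bracket_alpha_left (x z : Q) : H.bracket (H.alpha x) z = H.bracket x (H.alpha z) := by
  rw [← H.comm₁, H.comm₂]

theorem bracket_alpha_right_eq_neg (x z : Q) :
    H.bracket x (H.alpha z) = -H.bracket z (H.alpha x) := by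
  rw [H.skew, bracket_alpha_left]

theorem bracket_bracket_alpha (x y p : Q) :
    H.bracket (H.bracket x y) (H.alpha p) =
      H.bracket x (H.alpha (H.bracket y p)) + H.bracket (H.bracket x (H.alpha p)) y := by
  have hjacobi : H.bracket (H.alpha p) (H.bracket x y) =
      -(H.bracket (H.alpha x) (H.bracket y p) + H.bracket (H.alpha y) (H.bracket p x)) :=
    eq_neg_of_add_eq_zero_right (H.jacobi x y p)
  have hsecond :
      H.bracket (H.alpha y) (H.bracket p x) = H.bracket (H.bracket x (H.alpha p)) y := by
    rw [bracket_alpha_left, H.comm₁, H.skew y, H.skew (H.alpha p), map_neg, LinearMap.neg_apply,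
      neg_neg]
  rw [H.skew, hjacobi, neg_neg, bracket_alpha_left, hsecond]

theorem bracket_mem_wordSpan {L : Submodule 𝔽 Q} {q p x : Q} (hp : p ∈ H.wordSpan L q)
    (hx : x ∈ L) : H.bracket p x ∈ H.wordSpan L q := by
  induction hp using Submodule.span_induction with
  | mem w hw => exact Submodule.subset_span (IsWord.step x hw hx)
  | zero => simp
  | add a b _ _ ha hb => simpa only [map_add, LinearMap.add_apply] using add_mem ha hb
  | smul c a _ ha =>
    simpa only [map_smul, LinearMap.smul_apply] using Submodule.smul_mem _ c ha

variable {H}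

theorem IsIdealOf.bracket_mem_of_mem_right {L I : Submodule 𝔽 Q} (hI : H.IsIdealOf L I)
    {x y : Q} (hx : x ∈ L) (hy : y ∈ I) : H.bracket x y ∈ I := by
  rw [H.skew]
  exact neg_mem (hI.2.2 y hy x hx)

theorem IsIdealOf.bracket_alpha_mem_inf {L I J : Submodule 𝔽 Q} (hI : H.IsIdealOf L I)
    (hJ : H.IsIdealOf L J) {x y : Q} (hx : x ∈ I) (hy : y ∈ J) :
    H.bracket x (H.alpha y) ∈ I ⊓ J :=
  ⟨hI.2.2 x hx _ (hJ.1 (hJ.2.1 y hy)), hJ.bracket_mem_of_mem_right (hI.1 hx) (hJ.2.1 y hy)⟩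

theorem isEssentialIdealOf_of_exists_bracket_alpha_ne_zero {L I : Submodule 𝔽 Q}
    (hI : H.IsIdealOf L I) (h : ∀ p ∈ L, p ≠ 0 → ∃ x ∈ I, H.bracket x (H.alpha p) ≠ 0) :
    H.IsEssentialIdealOf L I := by
  refine ⟨hI, fun J hJ hJ_ne_bot hIJ => ?_⟩
  obtain ⟨p, hpJ, hp⟩ := Submodule.exists_mem_ne_zero_of_ne_bot hJ_ne_bot
  obtain ⟨x, hxI, hx⟩ := h p (hJ.1 hpJ) hp
  have hmem := hI.bracket_alpha_mem_inf hJ hxI hpJ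
  rw [hIJ, Submodule.mem_bot] at hmem
  exact hx hmem

theorem annIn_eq_zero_of_exists_bracket_alpha_ne_zero (M : Submodule 𝔽 Q) {S : Set Q}
    (h : ∀ p, p ≠ 0 → ∃ x ∈ S, H.bracket x (H.alpha p) ≠ 0) : H.annIn M S = {0} := by
  refine Set.eq_singleton_iff_unique_mem.2 ⟨⟨M.zero_mem, fun y _ => by simp⟩, ?_⟩
  rintro p ⟨-, hp⟩
  by_contra hp_ne
  obtain ⟨x, hxS, hx⟩ := h p hp_ne
  rw [bracket_alpha_right_eq_neg, hp x hxS, neg_zero] at hx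
  exact hx rfl

theorem isIdealOf_quotIdeal {L : Submodule 𝔽 Q} (hL : H.IsSubalgebra L) (q : Q) :
    H.IsIdealOf L (H.quotIdeal L q) := by
  obtain ⟨hL_alpha, hL_bracket⟩ := hL
  refine ⟨fun x hx => hx.1, ?_, ?_⟩
  · rintro x ⟨hxL, hx⟩
    refine ⟨hL_alpha x hxL, fun p hp => ?_⟩
    rw [bracket_alpha_left, ← H.comm₂]
    exact hL_alpha _ (hx p hp)
  · rintro x ⟨hxL, hx⟩ y hyL
    refine ⟨hL_bracket x hxL y hyL, fun p hp => ?_⟩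
    have hyp : H.bracket y p ∈ H.wordSpan L q := by
      rw [H.skew]
      exact neg_mem (H.bracket_mem_wordSpan hp hyL)
    rw [bracket_bracket_alpha]
    exact add_mem (hx _ hyp) (hL_bracket _ (hx p hp) y hyL)

end HomLieAlgebra

/-- If `Q` is an algebra of quotients of its Hom-subalgebra `L` and `q ∈ Q`, then
`(L : q)` is an essential Hom-ideal of `L` and `Ann_L((L : q)) = {0}`. -/
theorem quotIdeal_essential_of_isAlgebraOfQuotients
    {𝔽 Q : Type*} [Field 𝔽] [AddCommGroup Q] [Module 𝔽 Q]
    (H : HomLieAlgebra 𝔽 Q) (L : Submodule 𝔽 Q) (hL : H.IsSubalgebra L)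
    (hq : H.IsAlgebraOfQuotients L) (q : Q) :
    H.IsEssentialIdealOf L (H.quotIdeal L q) ∧
    H.annIn L (H.quotIdeal L q : Set Q) = {0} :=
  ⟨HomLieAlgebra.isEssentialIdealOf_of_exists_bracket_alpha_ne_zero
      (HomLieAlgebra.isIdealOf_quotIdeal hL q) fun p _ hp => hq p q hp,
    HomLieAlgebra.annIn_eq_zero_of_exists_bracket_alpha_ne_zero L fun p hp => hq p q hp⟩
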